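/- arXiv:math/0603062 — 4 statements merged into one kernel-verified Lean document; each statement's English description precedes it below -/
import Mathlib

section
/- Let A and B be self-adjoint operators on a finite-dimensional complex inner product space with A ≤ B, and let t > 0. Then tr(e^{-tA}) ≥ tr(e^{-tB}). -/
open NormedSpace
open scoped ComplexOrder Matrix

section Aux

variable {n : Type*} [Fintype n] [DecidableEq n]

private lemma conj_diag_entry (P : Matrix n n ℂ) (d : n → ℂ) (k : n) :
    (P * Matrix.diagonal d * Pᴴ) k k = ∑ j, (Complex.normSq (P k j) : ℂ) * d j := by
  rw [Matrix.mul_apply]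
  refine Finset.sum_congr rfl fun j _ => ?_
  rw [Matrix.mul_diagonal, Matrix.conjTranspose_apply, RCLike.star_def, mul_right_comm,
    Complex.mul_conj]

private lemma exp_neg_smul_hermitian {M : Matrix n n ℂ} (hM : M.IsHermitian) (t : ℝ) :
    exp (-(t : ℂ) • M) = (hM.eigenvectorUnitary : Matrix n n ℂ) *
      Matrix.diagonal (fun j => Complex.exp (-(t : ℂ) * hM.eigenvalues j)) *
      ((hM.eigenvectorUnitary : Matrix n n ℂ))ᴴ := by
  set V : Matrix n n ℂ := (hM.eigenvectorUnitary : Matrix n n ℂ) with hV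
  have hV1 : V * Vᴴ = 1 := by
    simpa [Matrix.star_eq_conjTranspose] using Unitary.coe_mul_star_self hM.eigenvectorUnitary
  have hinv : V⁻¹ = Vᴴ := Matrix.inv_eq_right_inv hV1
  have hV2 : Vᴴ * V = 1 := by
    simpa [Matrix.star_eq_conjTranspose] using Unitary.coe_star_mul_self hM.eigenvectorUnitary
  have hU : IsUnit V := ⟨⟨V, Vᴴ, hV1, hV2⟩, rfl⟩
  have hdiag : Matrix.diagonal (fun j => -(t : ℂ) * (hM.eigenvalues j : ℂ))
      = -(t : ℂ) • Matrix.diagonal (RCLike.ofReal ∘ hM.eigenvalues) := by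
    rw [← Matrix.diagonal_smul]
    congr 1
  have h1 : -(t : ℂ) • M =
      V * Matrix.diagonal (fun j => -(t : ℂ) * (hM.eigenvalues j : ℂ)) * V⁻¹ := by
    conv_lhs => rw [hM.spectral_theorem]
    rw [hinv, hdiag, Unitary.conjStarAlgAut_apply, Matrix.star_eq_conjTranspose, mul_smul_comm, smul_mul_assoc]
  rw [h1, Matrix.exp_conj V _ hU, Matrix.exp_diagonal, hinv]
  congr 2
  funext j
  simp [Pi.exp_def, Complex.exp_eq_exp_ℂ]

end Aux

/-- If `A ≤ B` are Hermitian matrices and `t > 0`, then `tr e^{-tA} ≥ tr e^{-tB}`. -/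
theorem stmt_8 {n : Type*} [Fintype n] [DecidableEq n]
    (A B : Matrix n n ℂ) (hA : A.IsHermitian) (hB : B.IsHermitian)
    (hAB : (B - A).PosSemidef) (t : ℝ) (ht : 0 < t) :
    ((exp (-(t : ℂ) • B)).trace).re ≤ ((exp (-(t : ℂ) • A)).trace).re := by
  classical
  set V : Matrix n n ℂ := (hA.eigenvectorUnitary : Matrix n n ℂ) with hVdef
  set W : Matrix n n ℂ := (hB.eigenvectorUnitary : Matrix n n ℂ) with hWdef
  set α : n → ℝ := hA.eigenvalues with hα
  set β : n → ℝ := hB.eigenvalues with hβ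
  have hV1 : V * Vᴴ = 1 := by
    simpa [Matrix.star_eq_conjTranspose] using Unitary.coe_mul_star_self hA.eigenvectorUnitary
  have hV2 : Vᴴ * V = 1 := by
    simpa [Matrix.star_eq_conjTranspose] using Unitary.coe_star_mul_self hA.eigenvectorUnitary
  have hW1 : W * Wᴴ = 1 := by
    simpa [Matrix.star_eq_conjTranspose] using Unitary.coe_mul_star_self hB.eigenvectorUnitary
  have hW2 : Wᴴ * W = 1 := by
    simpa [Matrix.star_eq_conjTranspose] using Unitary.coe_star_mul_self hB.eigenvectorUnitary
  set P : Matrix n n ℂ := Wᴴ * V with hPdef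
  have hP1 : P * Pᴴ = 1 := by
    rw [hPdef, Matrix.conjTranspose_mul, Matrix.conjTranspose_conjTranspose,
      Matrix.mul_assoc, ← Matrix.mul_assoc V, hV1, Matrix.one_mul, hW2]
  have hP2 : Pᴴ * P = 1 := by
    rw [hPdef, Matrix.conjTranspose_mul, Matrix.conjTranspose_conjTranspose,
      Matrix.mul_assoc, ← Matrix.mul_assoc W, hW1, Matrix.one_mul, hV2]
  set w : n → n → ℝ := fun k j => Complex.normSq (P k j) with hwdef
  have hw_nonneg : ∀ k j, 0 ≤ w k j := fun k j => Complex.normSq_nonneg _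
  have hw_row : ∀ k, ∑ j, w k j = 1 := by
    intro k
    have h := congrFun (congrFun hP1 k) k
    simp only [Matrix.mul_apply, Matrix.conjTranspose_apply, Matrix.one_apply_eq,
      RCLike.star_def, Complex.mul_conj] at h
    have := congrArg Complex.re h
    simpa [Complex.re_sum] using this
  have hw_col : ∀ j, ∑ k, w k j = 1 := by
    intro j
    have h := congrFun (congrFun hP2 j) j
    simp only [Matrix.mul_apply, Matrix.conjTranspose_apply, Matrix.one_apply_eq,
      RCLike.star_def] at h
    have h' : (∑ k, (w k j : ℂ)) = 1 := by
      rw [← h]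
      refine Finset.sum_congr rfl fun k _ => ?_
      rw [hwdef, mul_comm, Complex.mul_conj]
    have := congrArg Complex.re h'
    simpa [Complex.re_sum] using this
  have hWAW : ∀ k, ((Wᴴ * A * W) k k) = ∑ j, (w k j : ℂ) * (α j : ℂ) := by
    intro k
    have hspec : A = V * Matrix.diagonal (RCLike.ofReal ∘ α) * Vᴴ := by
      conv_lhs => rw [hA.spectral_theorem]
      rw [Unitary.conjStarAlgAut_apply, Matrix.star_eq_conjTranspose]
    have heq : Wᴴ * A * W = P * Matrix.diagonal (RCLike.ofReal ∘ α) * Pᴴ := by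
      rw [hspec, hPdef, Matrix.conjTranspose_mul, Matrix.conjTranspose_conjTranspose]
      simp only [Matrix.mul_assoc]
    rw [heq, conj_diag_entry]
    exact Finset.sum_congr rfl fun j _ => rfl
  have hWBW : ∀ k, ((Wᴴ * B * W) k k) = (β k : ℂ) := by
    intro k
    have h := hB.conjStarAlgAut_star_eigenvectorUnitary
    rw [Unitary.conjStarAlgAut_apply, Unitary.coe_star, star_star,
      Matrix.star_eq_conjTranspose] at h
    rw [h]
    simp [Matrix.diagonal_apply, hβ]
  have havg : ∀ k, ∑ j, w k j * α j ≤ β k := by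
    intro k
    have hpsd : (Wᴴ * (B - A) * W).PosSemidef := hAB.conjTranspose_mul_mul_same W
    have h0 : 0 ≤ ((Wᴴ * (B - A) * W) k k) := by
      exact hpsd.diag_nonneg
    have hsub : (Wᴴ * (B - A) * W) k k = (β k : ℂ) - ∑ j, (w k j : ℂ) * (α j : ℂ) := by
      rw [Matrix.mul_sub, Matrix.sub_mul, Matrix.sub_apply, hWBW k, hWAW k]
    rw [hsub] at h0
    have hre := (Complex.le_def.mp h0).1
    simp only [Complex.zero_re, Complex.sub_re, Complex.ofReal_re, Complex.re_sum] at hre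
    have hrw : (∑ j, ((w k j : ℂ) * (α j : ℂ))).re = ∑ j, w k j * α j := by
      rw [Complex.re_sum]
      refine Finset.sum_congr rfl fun j _ => ?_
      rw [← Complex.ofReal_mul, Complex.ofReal_re]
    rw [show ∑ j, ((w k j : ℂ) * (α j : ℂ)).re = (∑ j, ((w k j : ℂ) * (α j : ℂ))).re from
      (Complex.re_sum _ _).symm, hrw] at hre
    linarith
  have htr : ∀ (M : Matrix n n ℂ) (hM : M.IsHermitian),
      ((exp (-(t : ℂ) • M)).trace) = ∑ j, Complex.exp (-(t : ℂ) * hM.eigenvalues j) := by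
    intro M hM
    rw [exp_neg_smul_hermitian hM t, Matrix.trace_mul_cycle]
    have h : (hM.eigenvectorUnitary : Matrix n n ℂ)ᴴ * (hM.eigenvectorUnitary : Matrix n n ℂ)
        = 1 := by
      simpa [Matrix.star_eq_conjTranspose] using Unitary.coe_star_mul_self hM.eigenvectorUnitary
    rw [h, Matrix.one_mul, Matrix.trace_diagonal]
  have hco : ∀ (s : ℝ), (-(t : ℂ) * (s : ℂ)) = ((-t * s : ℝ) : ℂ) := by
    intro s; push_cast; ring
  have htrA : ((exp (-(t : ℂ) • A)).trace).re = ∑ j, Real.exp (-t * α j) := by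
    rw [htr A hA, Complex.re_sum]
    refine Finset.sum_congr rfl fun j _ => ?_
    rw [hco, ← Complex.ofReal_exp, Complex.ofReal_re]
  have htrB : ((exp (-(t : ℂ) • B)).trace).re = ∑ k, Real.exp (-t * β k) := by
    rw [htr B hB, Complex.re_sum]
    refine Finset.sum_congr rfl fun k _ => ?_
    rw [hco, ← Complex.ofReal_exp, Complex.ofReal_re]
  rw [htrA, htrB]
  have hsum : ∑ j, Real.exp (-t * α j) = ∑ k, ∑ j, w k j * Real.exp (-t * α j) := by
    rw [Finset.sum_comm]
    refine Finset.sum_congr rfl fun j _ => ?_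
    rw [← Finset.sum_mul, hw_col j, one_mul]
  rw [hsum]
  refine Finset.sum_le_sum fun k _ => ?_
  calc Real.exp (-t * β k) ≤ Real.exp (-t * ∑ j, w k j * α j) := by
        apply Real.exp_le_exp.mpr
        have := havg k
        nlinarith
    _ = Real.exp (∑ j, w k j • (-t * α j)) := by
        congr 1
        rw [Finset.mul_sum]
        refine Finset.sum_congr rfl fun j _ => ?_
        simp only [smul_eq_mul]; ring
    _ ≤ ∑ j, w k j * Real.exp (-t * α j) := by
        have h := convexOn_exp.map_sum_le (t := Finset.univ) (w := w k)
          (p := fun j => -t * α j) (fun j _ => hw_nonneg k j) (hw_row k)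
          (fun j _ => Set.mem_univ _)
        simpa [smul_eq_mul] using h
end

section
/- Let f : ℝ → ℝ be monotone increasing and A ≤ B self-adjoint operators on a finite-dimensional complex inner product space. Then tr f(A) ≤ tr f(B), where f(A) is defined by the functional calculus (applying f to eigenvalues). -/
/-!
Weyl's monotonicity principle: if `T ≤ S` in the Loewner order, then the `k`-th largest
eigenvalue of `T` is at most that of `S`. The span of the top `k + 1` eigenvectors of `T` and the
span of the bottom `n - k` eigenvectors of `S` meet nontrivially by a dimension count, and at a
common vector `x ≠ 0` we get `λₖ(T) ‖x‖² ≤ re ⟪T x, x⟫ ≤ re ⟪S x, x⟫ ≤ λₖ(S) ‖x‖²`. Summing the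
monotone `f` over the eigenvalues in decreasing order then gives the trace inequality.
-/

open scoped ComplexOrder InnerProductSpace

section InnerProductSpace

variable {𝕜 E : Type*} [RCLike 𝕜] [NormedAddCommGroup E] [InnerProductSpace 𝕜 E]
  [FiniteDimensional 𝕜 E] {n : ℕ}

theorem exists_ne_zero_forall_inner_eq_zero (hn : Module.finrank 𝕜 E = n) (u w : Fin n → E)
    (k : Fin n) :
    ∃ x ≠ 0, (∀ i, k < i → ⟪u i, x⟫_𝕜 = 0) ∧ ∀ i, i < k → ⟪w i, x⟫_𝕜 = 0 := by
  let L : E →ₗ[𝕜] ({i // k < i} → 𝕜) × ({i // i < k} → 𝕜) :=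
    (LinearMap.pi fun i : {i // k < i} => innerₛₗ 𝕜 (u i)).prod
      (LinearMap.pi fun i : {i // i < k} => innerₛₗ 𝕜 (w i))
  have hcard : Module.finrank 𝕜 (({i // k < i} → 𝕜) × ({i // i < k} → 𝕜)) = n - 1 - k + k := by
    rw [Module.finrank_prod, Module.finrank_fintype_fun_eq_card,
      Module.finrank_fintype_fun_eq_card, Fintype.card_subtype, Fintype.card_subtype,
      Finset.filter_lt_eq_Ioi, Finset.filter_gt_eq_Iio, Fin.card_Ioi, Fin.card_Iio]
  obtain ⟨x, hxL, hx0⟩ :=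
    Submodule.exists_mem_ne_zero_of_ne_bot (L.ker_ne_bot_of_finrank_lt (by omega))
  refine ⟨x, hx0, fun i hi => ?_, fun i hi => ?_⟩
  · exact congr_fun (congr_arg Prod.fst hxL) ⟨i, hi⟩
  · exact congr_fun (congr_arg Prod.snd hxL) ⟨i, hi⟩

namespace LinearMap.IsSymmetric

variable {T S : E →ₗ[𝕜] E}

theorem re_inner_apply_self_eq_sum (hT : T.IsSymmetric) (hn : Module.finrank 𝕜 E = n) (x : E) :
    RCLike.re ⟪T x, x⟫_𝕜 =
      ∑ i, hT.eigenvalues hn i * ‖⟪hT.eigenvectorBasis hn i, x⟫_𝕜‖ ^ 2 := by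
  rw [← (hT.eigenvectorBasis hn).sum_inner_mul_inner (T x) x, map_sum]
  refine Finset.sum_congr rfl fun i _ => ?_
  rw [hT, apply_eigenvectorBasis, inner_smul_right, mul_assoc, RCLike.re_ofReal_mul,
    inner_mul_symm_re_eq_norm, norm_mul, ← inner_conj_symm x, RCLike.norm_conj, sq]

theorem eigenvalues_mul_sq_norm_le_re_inner (hT : T.IsSymmetric) (hn : Module.finrank 𝕜 E = n)
    {k : Fin n} {x : E} (hx : ∀ i, k < i → ⟪hT.eigenvectorBasis hn i, x⟫_𝕜 = 0) :
    hT.eigenvalues hn k * ‖x‖ ^ 2 ≤ RCLike.re ⟪T x, x⟫_𝕜 := by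
  rw [hT.re_inner_apply_self_eq_sum hn, ← (hT.eigenvectorBasis hn).sum_sq_norm_inner_right,
    Finset.mul_sum]
  refine Finset.sum_le_sum fun i _ => ?_
  rcases le_or_gt i k with hik | hki
  · exact mul_le_mul_of_nonneg_right (hT.eigenvalues_antitone hn hik) (by positivity)
  · simp [hx i hki]

theorem re_inner_le_eigenvalues_mul_sq_norm (hT : T.IsSymmetric) (hn : Module.finrank 𝕜 E = n)
    {k : Fin n} {x : E} (hx : ∀ i, i < k → ⟪hT.eigenvectorBasis hn i, x⟫_𝕜 = 0) :
    RCLike.re ⟪T x, x⟫_𝕜 ≤ hT.eigenvalues hn k * ‖x‖ ^ 2 := by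
  rw [hT.re_inner_apply_self_eq_sum hn, ← (hT.eigenvectorBasis hn).sum_sq_norm_inner_right,
    Finset.mul_sum]
  refine Finset.sum_le_sum fun i _ => ?_
  rcases lt_or_ge i k with hik | hki
  · simp [hx i hik]
  · exact mul_le_mul_of_nonneg_right (hT.eigenvalues_antitone hn hki) (by positivity)

theorem eigenvalues_le_eigenvalues (hT : T.IsSymmetric) (hS : S.IsSymmetric) (hTS : T ≤ S)
    (hn : Module.finrank 𝕜 E = n) : hT.eigenvalues hn ≤ hS.eigenvalues hn := by
  intro k
  obtain ⟨x, hx0, hxT, hxS⟩ :=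
    exists_ne_zero_forall_inner_eq_zero hn (hT.eigenvectorBasis hn) (hS.eigenvectorBasis hn) k
  have hTS_x : RCLike.re ⟪T x, x⟫_𝕜 ≤ RCLike.re ⟪S x, x⟫_𝕜 := by
    have := hTS.re_inner_nonneg_left x
    rw [LinearMap.sub_apply, inner_sub_left, map_sub] at this
    linarith
  refine le_of_mul_le_mul_right ?_ (by positivity : 0 < ‖x‖ ^ 2)
  calc hT.eigenvalues hn k * ‖x‖ ^ 2 ≤ RCLike.re ⟪T x, x⟫_𝕜 :=
        hT.eigenvalues_mul_sq_norm_le_re_inner hn hxT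
    _ ≤ RCLike.re ⟪S x, x⟫_𝕜 := hTS_x
    _ ≤ hS.eigenvalues hn k * ‖x‖ ^ 2 := hS.re_inner_le_eigenvalues_mul_sq_norm hn hxS

end LinearMap.IsSymmetric

end InnerProductSpace

namespace Matrix.IsHermitian

variable {𝕜 ι : Type*} [RCLike 𝕜] [Fintype ι] [DecidableEq ι] {A B : Matrix ι ι 𝕜}

theorem sum_comp_eigenvalues {M : Type*} [AddCommMonoid M] (hA : A.IsHermitian) (g : ℝ → M) :
    ∑ i, g (hA.eigenvalues i) = ∑ k, g (hA.eigenvalues₀ k) :=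
  Equiv.sum_comp _ (g ∘ hA.eigenvalues₀)

theorem eigenvalues₀_le_eigenvalues₀ (hA : A.IsHermitian) (hB : B.IsHermitian)
    (hAB : (B - A).PosSemidef) : hA.eigenvalues₀ ≤ hB.eigenvalues₀ :=
  LinearMap.IsSymmetric.eigenvalues_le_eigenvalues _ _
    (by rwa [LinearMap.le_def, ← map_sub, Matrix.isPositive_toEuclideanLin_iff]) _

end Matrix.IsHermitian

/-- For `f : ℝ → ℝ` monotone increasing and Hermitian matrices `A ≤ B`,
`tr f(A) ≤ tr f(B)`, where `f(A)` applies `f` to the eigenvalues, so that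
`tr f(A) = ∑ᵢ f(λᵢ(A))`. -/
theorem stmt_9 {n : Type*} [Fintype n] [DecidableEq n] (f : ℝ → ℝ) (hf : Monotone f)
    (A B : Matrix n n ℂ) (hA : A.IsHermitian) (hB : B.IsHermitian)
    (hAB : (B - A).PosSemidef) :
    ∑ i, f (hA.eigenvalues i) ≤ ∑ i, f (hB.eigenvalues i) := by
  rw [hA.sum_comp_eigenvalues, hB.sum_comp_eigenvalues]
  exact Finset.sum_le_sum fun k _ => hf (hA.eigenvalues₀_le_eigenvalues₀ hB hAB k)
end

section
/- A probability measure μ on rooted connected locally finite networks is involution invariant if the Mass-Transport Principle equation holds for all Borel f supported on triples (G,x,y) with x adjacent to y. Then μ is involution invariant if and only if μ is unimodular, i.e., the Mass-Transport Principle holds for all Borel f ≥ 0. -/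
open MeasureTheory

/-- A rooted network on the vertex set `ℕ`, rooted at `0`. -/
abbrev Net (Ξ : Type*) := (ℕ → ℕ → Bool) × (ℕ → Ξ)

/-- Relabelling a network by a bijection of the vertices. -/
def Net.relabel {Ξ : Type*} (σ : ℕ ≃ ℕ) (ω : Net Ξ) : Net Ξ :=
  (fun i j => ω.1 (σ.symm i) (σ.symm j), fun i => ω.2 (σ.symm i))

/-- The underlying simple graph of a network. -/
def Net.graph {Ξ : Type*} (ω : Net Ξ) : SimpleGraph ℕ where
  Adj x y := x ≠ y ∧ (ω.1 x y = true ∨ ω.1 y x = true)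
  symm := by constructor; intro x y h; exact ⟨Ne.symm h.1, h.2.symm⟩
  loopless := by constructor; intro x h; exact h.1 rfl

/-- The Mass-Transport Principle for a single function `f`. -/
def MTPFor {Ξ : Type*} [MeasurableSpace Ξ] (μ : Measure (Net Ξ)) (f : Net Ξ × ℕ × ℕ → ENNReal) : Prop :=
  ∫⁻ ω, ∑' x : ℕ, f (ω, 0, x) ∂μ = ∫⁻ ω, ∑' x : ℕ, f (ω, x, 0) ∂μ

/-- Isomorphism invariance of a mass transport. -/
def Equivariant {Ξ : Type*} (f : Net Ξ × ℕ × ℕ → ENNReal) : Prop :=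
  ∀ (σ : ℕ ≃ ℕ) (ω : Net Ξ) (x y : ℕ), f (Net.relabel σ ω, σ x, σ y) = f (ω, x, y)

/-- Unimodularity: the MTP holds for all measurable equivariant `f ≥ 0`. -/
def Unimodular {Ξ : Type*} [MeasurableSpace Ξ] (μ : Measure (Net Ξ)) : Prop :=
  ∀ f : Net Ξ × ℕ × ℕ → ENNReal, Measurable f → Equivariant f → MTPFor μ f

/-- Involution invariance: the MTP holds for all measurable equivariant `f ≥ 0`
supported on pairs of adjacent vertices. -/
def InvolutionInvariant {Ξ : Type*} [MeasurableSpace Ξ] (μ : Measure (Net Ξ)) : Prop :=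
  ∀ f : Net Ξ × ℕ × ℕ → ENNReal, Measurable f → Equivariant f →
    (∀ (ω : Net Ξ) (x y : ℕ), ¬ (Net.graph ω).Adj x y → f (ω, x, y) = 0) →
    MTPFor μ f

namespace StmtAux13

open MeasureTheory
set_option linter.unusedSectionVars false
open scoped Classical ENNReal
section
variable {Ξ : Type*} [MeasurableSpace Ξ]


lemma measurable_adjSet (a b : ℕ) : MeasurableSet {ω : Net Ξ | (Net.graph ω).Adj a b} := by
  have h1 : Measurable fun ω : Net Ξ => ω.1 a b :=
    (measurable_pi_apply b).comp ((measurable_pi_apply a).comp measurable_fst)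
  have h2 : Measurable fun ω : Net Ξ => ω.1 b a :=
    (measurable_pi_apply a).comp ((measurable_pi_apply b).comp measurable_fst)
  have : {ω : Net Ξ | (Net.graph ω).Adj a b} =
      {ω : Net Ξ | a ≠ b} ∩ ({ω | ω.1 a b = true} ∪ {ω | ω.1 b a = true}) := by
    ext ω; simp [Net.graph, Set.mem_setOf_eq]
  rw [this]
  exact (MeasurableSet.const _).inter
    ((h1 (measurableSet_singleton true)).union (h2 (measurableSet_singleton true)))

/-- lazy reachability within `n` steps -/
def reachIn : ℕ → ℕ → ℕ → Net Ξ → Prop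
  | 0, a, b, _ => a = b
  | (n+1), a, b, ω => ∃ c, (a = c ∨ (Net.graph ω).Adj a c) ∧ reachIn n c b ω

lemma reachIn_refl (n a : ℕ) (ω : Net Ξ) : reachIn n a a ω := by
  induction n with
  | zero => rfl
  | succ n ih => exact ⟨a, Or.inl rfl, ih⟩

lemma reachIn_iff (n a b : ℕ) (ω : Net Ξ) :
    reachIn n a b ω ↔ (Net.graph ω).Reachable a b ∧ (Net.graph ω).dist a b ≤ n := by
  induction n generalizing a with
  | zero =>
    constructor
    · rintro rfl
      exact ⟨SimpleGraph.Reachable.refl a, by simp [SimpleGraph.dist_self]⟩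
    · rintro ⟨hr, hd⟩
      exact (hr.dist_eq_zero_iff).1 (Nat.le_zero.1 hd)
  | succ n ih =>
    constructor
    · rintro ⟨c, hc, h⟩
      obtain ⟨hr, hd⟩ := (ih c).1 h
      rcases hc with rfl | hadj
      · exact ⟨hr, hd.trans (Nat.le_succ n)⟩
      · obtain ⟨p, hp⟩ := hr.exists_walk_length_eq_dist
        refine ⟨hadj.reachable.trans hr, ?_⟩
        calc (Net.graph ω).dist a b ≤ (SimpleGraph.Walk.cons hadj p).length :=
            SimpleGraph.dist_le _
        _ = p.length + 1 := rfl
        _ ≤ n + 1 := by omega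
    · rintro ⟨hr, hd⟩
      obtain ⟨p, hp⟩ := hr.exists_walk_length_eq_dist
      cases p with
      | nil => exact (reachIn_refl _ _ _)
      | @cons _ c _ hadj q =>
        refine ⟨c, Or.inr hadj, (ih c).2 ⟨⟨q⟩, ?_⟩⟩
        have := SimpleGraph.dist_le q
        simp only [SimpleGraph.Walk.length_cons] at hp
        omega

lemma measurable_reachInSet (n a b : ℕ) : MeasurableSet {ω : Net Ξ | reachIn n a b ω} := by
  induction n generalizing a with
  | zero => simp only [reachIn]; exact MeasurableSet.const _
  | succ n ih =>
    have : {ω : Net Ξ | reachIn (n+1) a b ω} =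
        ⋃ c, (({ω : Net Ξ | a = c} ∪ {ω | (Net.graph ω).Adj a c}) ∩ {ω | reachIn n c b ω}) := by
      ext ω; simp [reachIn, Set.mem_setOf_eq]
    rw [this]
    exact MeasurableSet.iUnion fun c =>
      ((MeasurableSet.const _).union (measurable_adjSet a c)).inter (ih c)

/-- dist together with reachability -/
def D (ω : Net Ξ) (a b k : ℕ) : Prop :=
  (Net.graph ω).Reachable a b ∧ (Net.graph ω).dist a b = k

lemma measurable_DSet (a b k : ℕ) : MeasurableSet {ω : Net Ξ | D ω a b k} := by
  cases k with
  | zero =>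
    have : {ω : Net Ξ | D ω a b 0} = {ω : Net Ξ | reachIn 0 a b ω} := by
      ext ω
      simp only [Set.mem_setOf_eq, D, reachIn]
      constructor
      · rintro ⟨hr, hd⟩; exact hr.dist_eq_zero_iff.1 hd
      · rintro rfl; exact ⟨SimpleGraph.Reachable.refl a, SimpleGraph.dist_self⟩
    rw [this]; exact measurable_reachInSet 0 a b
  | succ k =>
    have : {ω : Net Ξ | D ω a b (k+1)} =
        {ω : Net Ξ | reachIn (k+1) a b ω} \ {ω | reachIn k a b ω} := by
      ext ω
      simp only [Set.mem_setOf_eq, D, Set.mem_diff, reachIn_iff]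
      constructor
      · rintro ⟨hr, hd⟩; exact ⟨⟨hr, hd.le⟩, fun h => by omega⟩
      · rintro ⟨⟨hr, hd⟩, hn⟩
        refine ⟨hr, ?_⟩
        by_contra hne
        exact hn ⟨hr, by omega⟩
    rw [this]; exact (measurable_reachInSet _ a b).diff (measurable_reachInSet _ a b)

lemma D_unique {ω : Net Ξ} {a b k m : ℕ} (h1 : D ω a b k) (h2 : D ω a b m) : k = m :=
  h1.2 ▸ h2.2 ▸ rfl

noncomputable section
open ENNReal

def step (ω : Net Ξ) (y u v : ℕ) : Prop :=
  (Net.graph ω).Adj u v ∧ ∃ k, D ω v y k ∧ D ω u y (k+1)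

def Nst (ω : Net Ξ) (y u : ℕ) : ℝ≥0∞ := ∑' v, if step ω y u v then 1 else 0

def wt (ω : Net Ξ) (y u v : ℕ) : ℝ≥0∞ := (if step ω y u v then 1 else 0) / Nst ω y u

def P : ℕ → Net Ξ → ℕ → ℕ → ℕ → ℝ≥0∞
  | 0, _, x, _, u => if u = x then 1 else 0
  | (i+1), ω, x, y, v => ∑' u, P i ω x y u * wt ω y u v

def Good (ω : Net Ξ) : Prop :=
  (Net.graph ω).Connected ∧ ∀ x, {y | (Net.graph ω).Adj x y}.Finite

lemma wt_eq_zero_of_not_step {ω : Net Ξ} {y u v : ℕ} (h : ¬ step ω y u v) :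
    wt ω y u v = 0 := by simp [wt, h]

lemma step_of_wt_ne_zero {ω : Net Ξ} {y u v : ℕ} (h : wt ω y u v ≠ 0) : step ω y u v :=
  by_contra fun hc => h (wt_eq_zero_of_not_step hc)

/-- existence of a step towards `y` -/
lemma exists_step {ω : Net Ξ} {y u k : ℕ} (h : D ω u y (k+1)) :
    ∃ v, step ω y u v := by
  obtain ⟨hr, hd⟩ := h
  obtain ⟨p, hp⟩ := hr.exists_walk_length_eq_dist
  cases p with
  | nil => simp [SimpleGraph.dist_self] at hd
  | @cons _ c _ hadj q =>
    have hq : (Net.graph ω).dist c y ≤ q.length := SimpleGraph.dist_le q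
    simp only [SimpleGraph.Walk.length_cons] at hp
    have hcy : (Net.graph ω).dist c y = k := by
      refine le_antisymm (by omega) ?_
      by_contra hlt
      push_neg at hlt
      obtain ⟨r, hr'⟩ := SimpleGraph.Reachable.exists_walk_length_eq_dist (G := Net.graph ω) (u := c) (v := y) ⟨q⟩
      have := SimpleGraph.dist_le (SimpleGraph.Walk.cons hadj r)
      simp only [SimpleGraph.Walk.length_cons] at this
      omega
    exact ⟨c, hadj, k, ⟨⟨q⟩, hcy⟩, hr, hd⟩

lemma sum_wt_eq_one {ω : Net Ξ} (hg : Good ω) {y u k : ℕ} (h : D ω u y (k+1)) :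
    ∑' v, wt ω y u v = 1 := by
  obtain ⟨v₀, hv₀⟩ := exists_step h
  have hfin : {v | step ω y u v}.Finite :=
    (hg.2 u).subset fun v hv => hv.1
  have hN0 : Nst ω y u ≠ 0 := by
    intro h0
    have : (1 : ℝ≥0∞) ≤ Nst ω y u := by
      have := ENNReal.le_tsum (f := fun v => if step ω y u v then (1:ℝ≥0∞) else 0) v₀
      simpa [Nst, hv₀] using this
    simp [h0] at this
  have hNtop : Nst ω y u ≠ ⊤ := by
    have : Nst ω y u = ∑ v ∈ hfin.toFinset, (if step ω y u v then (1:ℝ≥0∞) else 0) := by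
      refine tsum_eq_sum fun v hv => ?_
      simp only [Set.Finite.mem_toFinset, Set.mem_setOf_eq] at hv
      simp [hv]
    rw [this]
    refine (ENNReal.sum_lt_top.2 fun v _ => ?_).ne
    split <;> simp
  have : ∑' v, wt ω y u v = Nst ω y u / Nst ω y u := by
    simp only [wt, div_eq_mul_inv]
    rw [ENNReal.tsum_mul_right]
    rfl
  rw [this, ENNReal.div_self hN0 hNtop]

lemma P_support_mass {ω : Net Ξ} (hg : Good ω) {x y k : ℕ} (hxy : D ω x y k) :
    ∀ i ≤ k, (∀ u, P i ω x y u ≠ 0 → D ω u y (k - i)) ∧ (∑' u, P i ω x y u) = 1 := by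
  intro i
  induction i with
  | zero =>
    intro _
    constructor
    · intro u hu
      have : u = x := by
        by_contra hne
        simp [P, hne] at hu
      subst this
      simpa using hxy
    · simpa [P] using tsum_ite_eq x (1 : ℝ≥0∞)
  | succ i ih =>
    intro hik
    have hik' : i ≤ k := Nat.le_of_succ_le hik
    obtain ⟨hsupp, hmass⟩ := ih hik'
    constructor
    · intro v hv
      simp only [P, Ne, ENNReal.tsum_eq_zero, not_forall] at hv
      obtain ⟨u, hu⟩ := hv
      have hP : P i ω x y u ≠ 0 := fun h0 => hu (by simp [h0])
      have hw : wt ω y u v ≠ 0 := fun h0 => hu (by simp [h0])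
      obtain ⟨hadj, m, hvm, hum⟩ := step_of_wt_ne_zero hw
      have := D_unique hum (hsupp u hP)
      have hm : m = k - (i+1) := by omega
      exact hm ▸ hvm
    · simp only [P]
      rw [ENNReal.tsum_comm]
      calc (∑' u, ∑' v, P i ω x y u * wt ω y u v)
          = ∑' u, P i ω x y u := by
            refine tsum_congr fun u => ?_
            rw [ENNReal.tsum_mul_left]
            by_cases hP : P i ω x y u = 0
            · simp [hP]
            · have hD := hsupp u hP
              have hki : k - i = (k - (i+1)) + 1 := by omega
              rw [hki] at hD
              rw [sum_wt_eq_one hg hD, mul_one]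
      _ = 1 := hmass

lemma P_final {ω : Net Ξ} (hg : Good ω) {x y k : ℕ} (hxy : D ω x y k) (u : ℕ) :
    P k ω x y u = if u = y then 1 else 0 := by
  obtain ⟨hsupp, hmass⟩ := P_support_mass hg hxy k le_rfl
  have hzero : ∀ u ≠ y, P k ω x y u = 0 := by
    intro u hu
    by_contra h
    obtain ⟨hr, hd⟩ := hsupp u h
    simp only [Nat.sub_self] at hd
    exact hu (hr.dist_eq_zero_iff.1 hd)
  by_cases h : u = y
  · subst h
    rw [if_pos rfl]
    rw [tsum_eq_single u hzero] at hmass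
    exact hmass
  · rw [if_neg h]; exact hzero u h

end
section Equivariance


lemma graph_relabel_adj (σ : ℕ ≃ ℕ) (ω : Net Ξ) (x y : ℕ) :
    (Net.graph (Net.relabel σ ω)).Adj (σ x) (σ y) ↔ (Net.graph ω).Adj x y := by
  simp [Net.graph, Net.relabel, σ.injective.ne_iff]

def relabelIso (σ : ℕ ≃ ℕ) (ω : Net Ξ) : Net.graph ω ≃g Net.graph (Net.relabel σ ω) :=
  { σ with map_rel_iff' := fun {a b} => graph_relabel_adj σ ω a b }

lemma iso_reachable {V W : Type*} {G : SimpleGraph V} {G' : SimpleGraph W} (e : G ≃g G')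
    (u v : V) : G'.Reachable (e u) (e v) ↔ G.Reachable u v := by
  constructor
  · intro h
    have := h.map e.symm.toHom
    simpa using this
  · intro h; exact h.map e.toHom

lemma hom_dist_le {V W : Type*} {G : SimpleGraph V} {G' : SimpleGraph W} (f : G →g G')
    {u v : V} (h : G.Reachable u v) : G'.dist (f u) (f v) ≤ G.dist u v := by
  obtain ⟨p, hp⟩ := h.exists_walk_length_eq_dist
  calc G'.dist (f u) (f v) ≤ (p.map f).length := SimpleGraph.dist_le _
  _ = p.length := SimpleGraph.Walk.length_map f p
  _ = G.dist u v := hp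

lemma iso_dist {V W : Type*} {G : SimpleGraph V} {G' : SimpleGraph W} (e : G ≃g G')
    (u v : V) : G'.dist (e u) (e v) = G.dist u v := by
  by_cases h : G.Reachable u v
  · refine le_antisymm (hom_dist_le e.toHom h) ?_
    have h' : G'.Reachable (e u) (e v) := (iso_reachable e u v).2 h
    have := hom_dist_le e.symm.toHom h'
    simpa using this
  · rw [SimpleGraph.dist_eq_zero_of_not_reachable h,
      SimpleGraph.dist_eq_zero_of_not_reachable (fun h' => h ((iso_reachable e u v).1 h'))]

lemma D_relabel (σ : ℕ ≃ ℕ) (ω : Net Ξ) (a b k : ℕ) :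
    D (Net.relabel σ ω) (σ a) (σ b) k ↔ D ω a b k := by
  have h1 : (Net.graph (Net.relabel σ ω)).Reachable (σ a) (σ b) ↔ (Net.graph ω).Reachable a b :=
    iso_reachable (relabelIso σ ω) a b
  have h2 : (Net.graph (Net.relabel σ ω)).dist (σ a) (σ b) = (Net.graph ω).dist a b :=
    iso_dist (relabelIso σ ω) a b
  unfold D
  rw [h1, h2]

lemma step_relabel (σ : ℕ ≃ ℕ) (ω : Net Ξ) (y u v : ℕ) :
    step (Net.relabel σ ω) (σ y) (σ u) (σ v) ↔ step ω y u v := by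
  unfold step
  rw [graph_relabel_adj σ ω u v]
  simp only [D_relabel σ ω]

lemma Nst_relabel (σ : ℕ ≃ ℕ) (ω : Net Ξ) (y u : ℕ) :
    Nst (Net.relabel σ ω) (σ y) (σ u) = Nst ω y u := by
  unfold Nst
  rw [← Equiv.tsum_eq σ]
  exact tsum_congr fun v => by rw [step_relabel]

lemma wt_relabel (σ : ℕ ≃ ℕ) (ω : Net Ξ) (y u v : ℕ) :
    wt (Net.relabel σ ω) (σ y) (σ u) (σ v) = wt ω y u v := by
  unfold wt
  rw [Nst_relabel, step_relabel]

lemma P_relabel (i : ℕ) (σ : ℕ ≃ ℕ) (ω : Net Ξ) (x y u : ℕ) :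
    P i (Net.relabel σ ω) (σ x) (σ y) (σ u) = P i ω x y u := by
  induction i generalizing u with
  | zero => simp [P, σ.injective.eq_iff]
  | succ i ih =>
    simp only [P]
    rw [← Equiv.tsum_eq σ]
    exact tsum_congr fun a => by rw [ih, wt_relabel]

lemma Good_relabel (σ : ℕ ≃ ℕ) (ω : Net Ξ) (hg : Good ω) : Good (Net.relabel σ ω) := by
  constructor
  · exact SimpleGraph.Connected.map (relabelIso σ ω).toHom (relabelIso σ ω).toEquiv.surjective hg.1
  · intro x
    have : {y | (Net.graph (Net.relabel σ ω)).Adj x y} =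
        σ '' {y | (Net.graph ω).Adj (σ.symm x) y} := by
      ext y
      simp only [Set.mem_setOf_eq, Set.mem_image]
      constructor
      · intro h
        refine ⟨σ.symm y, ?_, by simp⟩
        have := (graph_relabel_adj σ ω (σ.symm x) (σ.symm y)).1
        simpa using this (by simpa using h)
      · rintro ⟨z, hz, rfl⟩
        have := (graph_relabel_adj σ ω (σ.symm x) z).2 hz
        simpa using this
    rw [this]
    exact ((hg.2 (σ.symm x))).image σ

end Equivariance
section Meas
variable {Ξ : Type*} [MeasurableSpace Ξ]

lemma measurable_stepSet (y u v : ℕ) : MeasurableSet {ω : Net Ξ | step ω y u v} := by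
  have : {ω : Net Ξ | step ω y u v} =
      {ω | (Net.graph ω).Adj u v} ∩ ⋃ k, ({ω | D ω v y k} ∩ {ω | D ω u y (k+1)}) := by
    ext ω; simp [step, Set.mem_setOf_eq]
  rw [this]
  exact (measurable_adjSet u v).inter
    (MeasurableSet.iUnion fun k => (measurable_DSet v y k).inter (measurable_DSet u y (k+1)))

lemma measurable_stepInd (y u v : ℕ) :
    Measurable fun ω : Net Ξ => (if step ω y u v then (1:ℝ≥0∞) else 0) := by
  have : (fun ω : Net Ξ => (if step ω y u v then (1:ℝ≥0∞) else 0)) =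
      {ω : Net Ξ | step ω y u v}.indicator (fun _ => 1) := by
    ext ω; by_cases h : step ω y u v <;> simp [h, Set.indicator]
  rw [this]
  exact measurable_const.indicator (measurable_stepSet y u v)

lemma measurable_Nst (y u : ℕ) : Measurable fun ω : Net Ξ => Nst ω y u :=
  Measurable.ennreal_tsum fun v => measurable_stepInd y u v

lemma measurable_wt (y u v : ℕ) : Measurable fun ω : Net Ξ => wt ω y u v :=
  (measurable_stepInd y u v).div (measurable_Nst y u)

lemma measurable_P (i : ℕ) (x y u : ℕ) : Measurable fun ω : Net Ξ => P i ω x y u := by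
  induction i generalizing u with
  | zero => simp only [P]; exact measurable_const
  | succ i ih =>
    simp only [P]
    exact Measurable.ennreal_tsum fun a => (ih a).mul (measurable_wt y a u)

end Meas
section Main
variable {Ξ : Type*} [MeasurableSpace Ξ]



noncomputable def fD (f : Net Ξ × ℕ × ℕ → ℝ≥0∞) (k : ℕ) (ω : Net Ξ) (x y : ℕ) : ℝ≥0∞ :=
  if D ω x y k then f (ω, x, y) else 0

noncomputable def hkif (f : Net Ξ × ℕ × ℕ → ℝ≥0∞) (k i : ℕ) : Net Ξ × ℕ × ℕ → ℝ≥0∞ :=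
  fun p => ∑' x, ∑' y, fD f k p.1 x y * P i p.1 x y p.2.1 * wt p.1 y p.2.1 p.2.2

lemma measurable_fD {f : Net Ξ × ℕ × ℕ → ℝ≥0∞} (hf : Measurable f) (k x y : ℕ) :
    Measurable fun ω : Net Ξ => fD f k ω x y := by
  have h1 : Measurable fun ω : Net Ξ => f (ω, x, y) :=
    hf.comp (measurable_id.prodMk measurable_const)
  have : (fun ω : Net Ξ => fD f k ω x y) =
      {ω : Net Ξ | D ω x y k}.indicator (fun ω => f (ω, x, y)) := by
    ext ω; by_cases h : D ω x y k <;> simp [fD, h, Set.indicator]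
  rw [this]
  exact h1.indicator (measurable_DSet x y k)

lemma measurable_hkif {f : Net Ξ × ℕ × ℕ → ℝ≥0∞} (hf : Measurable f) (k i : ℕ) :
    Measurable (hkif f k i) := by
  apply measurable_from_prod_countable_left
  rintro ⟨u, v⟩
  exact Measurable.ennreal_tsum fun x => Measurable.ennreal_tsum fun y =>
    ((measurable_fD hf k x y).mul (measurable_P i x y u)).mul (measurable_wt y u v)

lemma fD_relabel {f : Net Ξ × ℕ × ℕ → ℝ≥0∞} (hf : Equivariant f) (σ : ℕ ≃ ℕ)
    (ω : Net Ξ) (k x y : ℕ) : fD f k (Net.relabel σ ω) (σ x) (σ y) = fD f k ω x y := by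
  unfold fD
  by_cases h : D ω x y k
  · rw [if_pos ((D_relabel σ ω x y k).2 h), if_pos h, hf σ ω x y]
  · rw [if_neg (fun hc => h ((D_relabel σ ω x y k).1 hc)), if_neg h]

lemma equivariant_hkif {f : Net Ξ × ℕ × ℕ → ℝ≥0∞} (hf : Equivariant f) (k i : ℕ) :
    Equivariant (hkif f k i) := by
  intro σ ω u v
  simp only [hkif]
  rw [← Equiv.tsum_eq σ (fun x => ∑' y, fD f k (Net.relabel σ ω) x y *
      P i (Net.relabel σ ω) x y (σ u) * wt (Net.relabel σ ω) y (σ u) (σ v))]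
  refine tsum_congr fun x => ?_
  rw [← Equiv.tsum_eq σ (fun y => fD f k (Net.relabel σ ω) (σ x) y *
      P i (Net.relabel σ ω) (σ x) y (σ u) * wt (Net.relabel σ ω) y (σ u) (σ v))]
  refine tsum_congr fun y => ?_
  rw [fD_relabel hf, P_relabel, wt_relabel]

lemma hkif_support (f : Net Ξ × ℕ × ℕ → ℝ≥0∞) (k i : ℕ) (ω : Net Ξ) (u v : ℕ)
    (h : ¬ (Net.graph ω).Adj u v) : hkif f k i (ω, u, v) = 0 := by
  simp only [hkif]
  rw [ENNReal.tsum_eq_zero]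
  intro x
  rw [ENNReal.tsum_eq_zero]
  intro y
  rw [wt_eq_zero_of_not_step (fun hs => h hs.1), mul_zero]

lemma sumv_hkif {ω : Net Ξ} (hg : Good ω) {f : Net Ξ × ℕ × ℕ → ℝ≥0∞} {k i : ℕ} (hik : i < k) :
    ∑' v, hkif f k i (ω, 0, v) = ∑' x, ∑' y, fD f k ω x y * P i ω x y 0 := by
  simp only [hkif]
  rw [ENNReal.tsum_comm]
  refine tsum_congr fun x => ?_
  rw [ENNReal.tsum_comm]
  refine tsum_congr fun y => ?_
  rw [ENNReal.tsum_mul_left]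
  by_cases hA : fD f k ω x y * P i ω x y 0 = 0
  · rw [hA, zero_mul]
  · have hfD : fD f k ω x y ≠ 0 := fun h0 => hA (by rw [h0, zero_mul])
    have hP : P i ω x y 0 ≠ 0 := fun h0 => hA (by rw [h0, mul_zero])
    have hD : D ω x y k := by
      by_contra hc; exact hfD (by simp [fD, hc])
    have hD0 : D ω 0 y (k - i) := (P_support_mass hg hD i (Nat.le_of_lt hik)).1 0 hP
    have hki : k - i = (k - i - 1) + 1 := by omega
    rw [hki] at hD0
    rw [sum_wt_eq_one hg hD0, mul_one]

lemma sumu_hkif (ω : Net Ξ) (f : Net Ξ × ℕ × ℕ → ℝ≥0∞) (k i : ℕ) :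
    ∑' u, hkif f k i (ω, u, 0) = ∑' x, ∑' y, fD f k ω x y * P (i+1) ω x y 0 := by
  simp only [hkif]
  rw [ENNReal.tsum_comm]
  refine tsum_congr fun x => ?_
  rw [ENNReal.tsum_comm]
  refine tsum_congr fun y => ?_
  simp only [P]
  rw [← ENNReal.tsum_mul_left]
  exact tsum_congr fun u => by rw [mul_assoc]

lemma M_zero (ω : Net Ξ) (f : Net Ξ × ℕ × ℕ → ℝ≥0∞) (k : ℕ) :
    ∑' x, ∑' y, fD f k ω x y * P 0 ω x y 0 = ∑' y, fD f k ω 0 y := by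
  refine (tsum_eq_single 0 fun x hx => ?_).trans ?_
  · have : ∀ y, fD f k ω x y * P 0 ω x y 0 = 0 := by
      intro y
      have : P 0 ω x y 0 = 0 := by simp [P, Ne.symm hx]
      rw [this, mul_zero]
    simp [this]
  · refine tsum_congr fun y => ?_
    have : P 0 ω 0 y 0 = 1 := by simp [P]
    rw [this, mul_one]

lemma M_final {ω : Net Ξ} (hg : Good ω) (f : Net Ξ × ℕ × ℕ → ℝ≥0∞) (k : ℕ) :
    ∑' x, ∑' y, fD f k ω x y * P k ω x y 0 = ∑' x, fD f k ω x 0 := by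
  refine tsum_congr fun x => ?_
  refine (tsum_eq_single 0 fun y hy => ?_).trans ?_
  · by_cases hD : D ω x y k
    · rw [P_final hg hD 0, if_neg (Ne.symm hy), mul_zero]
    · have : fD f k ω x y = 0 := by simp [fD, hD]
      rw [this, zero_mul]
  · by_cases hD : D ω x 0 k
    · rw [P_final hg hD 0, if_pos rfl, mul_one]
    · have : fD f k ω x 0 = 0 := by simp [fD, hD]
      rw [this, zero_mul]

end Main
section Final
variable {Ξ : Type*} [MeasurableSpace Ξ]



lemma D_zero_iff (ω : Net Ξ) (a b : ℕ) : D ω a b 0 ↔ a = b := by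
  constructor
  · rintro ⟨hr, hd⟩; exact hr.dist_eq_zero_iff.1 hd
  · rintro rfl; exact ⟨SimpleGraph.Reachable.refl a, SimpleGraph.dist_self⟩

lemma key_step {μ : Measure (Net Ξ)} (hInv : InvolutionInvariant μ)
    (hG : ∀ᵐ ω ∂μ, Good ω) {f : Net Ξ × ℕ × ℕ → ℝ≥0∞} (hf : Measurable f)
    (he : Equivariant f) {k i : ℕ} (hik : i < k) :
    ∫⁻ ω, (∑' x, ∑' y, fD f k ω x y * P i ω x y 0) ∂μ =
      ∫⁻ ω, (∑' x, ∑' y, fD f k ω x y * P (i+1) ω x y 0) ∂μ := by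
  have hMTP := hInv (hkif f k i) (measurable_hkif hf k i) (equivariant_hkif he k i)
    (hkif_support f k i)
  calc ∫⁻ ω, (∑' x, ∑' y, fD f k ω x y * P i ω x y 0) ∂μ
      = ∫⁻ ω, ∑' v, hkif f k i (ω, 0, v) ∂μ :=
        lintegral_congr_ae (hG.mono fun ω hg => (sumv_hkif hg hik).symm)
  _ = ∫⁻ ω, ∑' u, hkif f k i (ω, u, 0) ∂μ := hMTP
  _ = ∫⁻ ω, (∑' x, ∑' y, fD f k ω x y * P (i+1) ω x y 0) ∂μ :=
        lintegral_congr fun ω => sumu_hkif ω f k i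

lemma key {μ : Measure (Net Ξ)} (hInv : InvolutionInvariant μ)
    (hG : ∀ᵐ ω ∂μ, Good ω) {f : Net Ξ × ℕ × ℕ → ℝ≥0∞} (hf : Measurable f)
    (he : Equivariant f) (k : ℕ) :
    ∫⁻ ω, (∑' y, fD f k ω 0 y) ∂μ = ∫⁻ ω, (∑' x, fD f k ω x 0) ∂μ := by
  cases k with
  | zero =>
    refine lintegral_congr fun ω => ?_
    have h1 : ∑' y, fD f 0 ω 0 y = f (ω, 0, 0) := by
      refine (tsum_eq_single 0 fun y hy => ?_).trans ?_
      · simp only [fD]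
        exact if_neg fun h => hy ((D_zero_iff ω 0 y).1 h).symm
      · simp only [fD]
        rw [if_pos ((D_zero_iff ω 0 0).2 rfl)]
    have h2 : ∑' x, fD f 0 ω x 0 = f (ω, 0, 0) := by
      refine (tsum_eq_single 0 fun x hx => ?_).trans ?_
      · simp only [fD]
        exact if_neg fun h => hx ((D_zero_iff ω x 0).1 h)
      · simp only [fD]
        rw [if_pos ((D_zero_iff ω 0 0).2 rfl)]
    rw [h1, h2]
  | succ m =>
    have chain : ∀ i ≤ m + 1,
        ∫⁻ ω, (∑' x, ∑' y, fD f (m+1) ω x y * P 0 ω x y 0) ∂μ =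
          ∫⁻ ω, (∑' x, ∑' y, fD f (m+1) ω x y * P i ω x y 0) ∂μ := by
      intro i
      induction i with
      | zero => intro _; rfl
      | succ i ih =>
        intro hi
        rw [ih (Nat.le_of_succ_le hi)]
        exact key_step hInv hG hf he (Nat.lt_of_succ_le hi)
    calc ∫⁻ ω, (∑' y, fD f (m+1) ω 0 y) ∂μ
        = ∫⁻ ω, (∑' x, ∑' y, fD f (m+1) ω x y * P 0 ω x y 0) ∂μ :=
          lintegral_congr fun ω => (M_zero ω f (m+1)).symm
    _ = ∫⁻ ω, (∑' x, ∑' y, fD f (m+1) ω x y * P (m+1) ω x y 0) ∂μ := chain (m+1) le_rfl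
    _ = ∫⁻ ω, (∑' x, fD f (m+1) ω x 0) ∂μ :=
          lintegral_congr_ae (hG.mono fun ω hg => M_final hg f (m+1))

lemma sum_fD {ω : Net Ξ} (hg : Good ω) (f : Net Ξ × ℕ × ℕ → ℝ≥0∞) (a b : ℕ) :
    ∑' k, fD f k ω a b = f (ω, a, b) := by
  refine (tsum_eq_single ((Net.graph ω).dist a b) fun k hk => ?_).trans ?_
  · simp only [fD]
    exact if_neg fun hD : D ω a b k => hk (hD.2 ▸ rfl)
  · simp only [fD]
    exact if_pos ⟨hg.1.preconnected a b, rfl⟩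

theorem main {μ : Measure (Net Ξ)}
    (hconn : ∀ᵐ ω ∂μ, (Net.graph ω).Connected)
    (hlf : ∀ᵐ ω ∂μ, ∀ x : ℕ, {y : ℕ | (Net.graph ω).Adj x y}.Finite) :
    InvolutionInvariant μ ↔ Unimodular μ := by
  constructor
  · intro hInv f hf he
    have hG : ∀ᵐ ω ∂μ, Good ω := hconn.and hlf
    have hmeas : ∀ k : ℕ, AEMeasurable (fun ω => ∑' x, fD f k ω 0 x) μ :=
      fun k => (Measurable.ennreal_tsum fun x => measurable_fD hf k 0 x).aemeasurable
    have hmeas' : ∀ k : ℕ, AEMeasurable (fun ω => ∑' x, fD f k ω x 0) μ :=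
      fun k => (Measurable.ennreal_tsum fun x => measurable_fD hf k x 0).aemeasurable
    calc ∫⁻ ω, ∑' x, f (ω, 0, x) ∂μ
        = ∫⁻ ω, ∑' x, ∑' k, fD f k ω 0 x ∂μ :=
          lintegral_congr_ae (hG.mono fun ω hg =>
            tsum_congr fun x => (sum_fD hg f 0 x).symm)
    _ = ∫⁻ ω, ∑' k, ∑' x, fD f k ω 0 x ∂μ := lintegral_congr fun ω => ENNReal.tsum_comm
    _ = ∑' k, ∫⁻ ω, ∑' x, fD f k ω 0 x ∂μ := lintegral_tsum hmeas
    _ = ∑' k, ∫⁻ ω, ∑' x, fD f k ω x 0 ∂μ := tsum_congr fun k => key hInv hG hf he k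
    _ = ∫⁻ ω, ∑' k, ∑' x, fD f k ω x 0 ∂μ := (lintegral_tsum hmeas').symm
    _ = ∫⁻ ω, ∑' x, ∑' k, fD f k ω x 0 ∂μ := lintegral_congr fun ω => ENNReal.tsum_comm
    _ = ∫⁻ ω, ∑' x, f (ω, x, 0) ∂μ :=
          lintegral_congr_ae (hG.mono fun ω hg =>
            tsum_congr fun x => sum_fD hg f x 0)
  · intro hUni f hf he _
    exact hUni f hf he

end Final
end


end StmtAux13

/-- A probability measure on rooted connected locally finite networks is involution
invariant if and only if it is unimodular. -/
theorem stmt_13 {Ξ : Type*} [MeasurableSpace Ξ]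
    (μ : Measure (Net Ξ)) [IsProbabilityMeasure μ]
    (hconn : ∀ᵐ ω ∂μ, (Net.graph ω).Connected)
    (hlf : ∀ᵐ ω ∂μ, ∀ x : ℕ, {y : ℕ | (Net.graph ω).Adj x y}.Finite) :
    InvolutionInvariant μ ↔ Unimodular μ :=
  StmtAux13.main hconn hlf
end

section
/- For a unimodular probability measure μ on rooted graphs with finite expected root degree, define ι_E(μ) as the infimum over all finite-cluster percolations (ν, open-set) of ∫ (∑_{x∈K} n(x))/|K| dν, and α(μ) as the supremum over the same family of the expected degree of the root within its open cluster. Then ι_E(μ) + α(μ) = E_μ[deg(o)]. In particular, μ is amenable (ι_E(μ) = 0) iff α(μ) = E_μ[deg(o)]. -/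
open MeasureTheory

/-- A rooted graph on `ℕ` (root `0`) together with a percolation configuration:
the first coordinate is the adjacency, the second marks edges as open. -/
abbrev PNet := (ℕ → ℕ → Bool) × (ℕ → ℕ → Bool)

/-- A rooted graph on `ℕ` (root `0`). -/
abbrev GNet := ℕ → ℕ → Bool

/-- Relabelling by a bijection of the vertices. -/
def PNet.relabel (σ : ℕ ≃ ℕ) (ω : PNet) : PNet :=
  (fun i j => ω.1 (σ.symm i) (σ.symm j), fun i j => ω.2 (σ.symm i) (σ.symm j))

def GNet.relabel (σ : ℕ ≃ ℕ) (g : GNet) : GNet :=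
  fun i j => g (σ.symm i) (σ.symm j)

/-- The underlying simple graph. -/
def GNet.graph (g : GNet) : SimpleGraph ℕ where
  Adj x y := x ≠ y ∧ (g x y = true ∨ g y x = true)
  symm := by constructor; intro x y h; exact ⟨Ne.symm h.1, h.2.symm⟩
  loopless := by constructor; intro x h; exact h.1 rfl

/-- The open subgraph of a percolation configuration. -/
def PNet.openGraph (ω : PNet) : SimpleGraph ℕ where
  Adj x y := (GNet.graph ω.1).Adj x y ∧ (ω.2 x y = true ∨ ω.2 y x = true)
  symm := by constructor; intro x y h; exact ⟨(GNet.graph ω.1).adj_symm h.1, h.2.symm⟩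
  loopless := by constructor; intro x h; exact (GNet.graph ω.1).irrefl h.1

/-- The open cluster of a vertex. -/
def PNet.cluster (ω : PNet) (x : ℕ) : Set ℕ := {y | (PNet.openGraph ω).Reachable x y}

/-- `n(x)`: the number of neighbors of `x` joined to `x` by a closed edge, i.e. the
number of edges at `x` leaving the open subgraph. -/
noncomputable def PNet.closedDeg (ω : PNet) (x : ℕ) : ℕ :=
  Nat.card {y : ℕ | (GNet.graph ω.1).Adj x y ∧ ¬ (PNet.openGraph ω).Adj x y}

/-- The degree of a vertex in a rooted graph. -/
noncomputable def GNet.deg (g : GNet) (x : ℕ) : ℕ :=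
  Nat.card {y : ℕ | (GNet.graph g).Adj x y}

/-- Unimodularity for percolation configurations. -/
def UnimodularP (ν : Measure PNet) : Prop :=
  ∀ f : PNet × ℕ × ℕ → ENNReal, Measurable f →
    (∀ (σ : ℕ ≃ ℕ) (ω : PNet) (x y : ℕ),
      f (PNet.relabel σ ω, σ x, σ y) = f (ω, x, y)) →
    ∫⁻ ω, ∑' x : ℕ, f (ω, 0, x) ∂ν = ∫⁻ ω, ∑' x : ℕ, f (ω, x, 0) ∂ν

/-- Unimodularity for rooted graphs. -/
def UnimodularG (μ : Measure GNet) : Prop :=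
  ∀ f : GNet × ℕ × ℕ → ENNReal, Measurable f →
    (∀ (σ : ℕ ≃ ℕ) (g : GNet) (x y : ℕ),
      f (GNet.relabel σ g, σ x, σ y) = f (g, x, y)) →
    ∫⁻ g, ∑' x : ℕ, f (g, 0, x) ∂μ = ∫⁻ g, ∑' x : ℕ, f (g, x, 0) ∂μ


/-- The finite-cluster percolations on a unimodular measure `μ` on rooted graphs. -/
def FinitePercolations (μ : Measure GNet) : Set (Measure PNet) :=
  {ν | IsProbabilityMeasure ν ∧ UnimodularP ν ∧ ν.map Prod.fst = μ ∧
    (∀ᵐ ω ∂ν, (PNet.cluster ω 0).Finite)}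

/-- `ι_E(μ)`: the infimum over finite-cluster percolations of the expected cluster
average of the number of edges leaving the open cluster. -/
noncomputable def iotaE (μ : Measure GNet) : ENNReal :=
  ⨅ ν ∈ FinitePercolations μ,
    ∫⁻ ω, (∑' x : PNet.cluster ω 0, (PNet.closedDeg ω (x : ℕ) : ENNReal))
      / (Nat.card (PNet.cluster ω 0) : ENNReal) ∂ν

/-- `α(μ)`: the supremum over finite-cluster percolations of the expected degree of the
root within its open cluster. -/
noncomputable def alphaE (μ : Measure GNet) : ENNReal :=
  ⨆ ν ∈ FinitePercolations μ,
    ∫⁻ ω, ((GNet.deg ω.1 0 : ENNReal) - (PNet.closedDeg ω 0 : ENNReal)) ∂ν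

section NatCard
variable {α : Type*} [MeasurableSpace α] {A : α → Set ℕ}

lemma measurableSet_eq_coe (h : ∀ n, MeasurableSet {a | n ∈ A a}) (S : Finset ℕ) :
    MeasurableSet {a | A a = ↑S} := by
  have : {a | A a = ↑S} = ⋂ n, {a | n ∈ A a ↔ n ∈ S} := by
    ext a; simp [Set.ext_iff]
  rw [this]
  refine MeasurableSet.iInter fun n => ?_
  by_cases hn : n ∈ S
  · have e : {a | n ∈ A a ↔ n ∈ S} = {a | n ∈ A a} := by ext a; simp [hn]
    rw [e]; exact h n
  · have e : {a | n ∈ A a ↔ n ∈ S} = {a | n ∈ A a}ᶜ := by ext a; simp [hn]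
    rw [e]; exact (h n).compl

lemma measurableSet_finite (h : ∀ n, MeasurableSet {a | n ∈ A a}) :
    MeasurableSet {a | (A a).Finite} := by
  have : {a | (A a).Finite} = ⋃ S : Finset ℕ, {a | A a = ↑S} := by
    ext a
    constructor
    · intro hf; exact Set.mem_iUnion.2 ⟨hf.toFinset, by simp⟩
    · intro ha; obtain ⟨S, hS⟩ := Set.mem_iUnion.1 ha
      rw [Set.mem_setOf_eq] at hS; rw [Set.mem_setOf_eq, hS]; exact S.finite_toSet
  rw [this]
  exact MeasurableSet.iUnion fun S => measurableSet_eq_coe h S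

lemma measurable_natCard (h : ∀ n, MeasurableSet {a | n ∈ A a}) :
    Measurable fun a => Nat.card (A a) := by
  refine measurable_to_countable' fun k => ?_
  match k with
  | 0 =>
    have : (fun a => Nat.card (A a)) ⁻¹' {0} =
        {a | A a = (↑(∅ : Finset ℕ) : Set ℕ)} ∪ {a | (A a).Finite}ᶜ := by
      ext a
      simp only [Set.mem_preimage, Set.mem_singleton_iff, Set.mem_union, Set.mem_setOf_eq,
        Set.mem_compl_iff, Finset.coe_empty]
      constructor
      · intro h0
        by_cases hf : (A a).Finite
        · left
          rw [Nat.card_coe_set_eq] at h0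
          exact Set.ncard_eq_zero hf |>.1 h0
        · right; exact hf
      · rintro (he | hi)
        · simp [he]
        · rw [Nat.card_coe_set_eq]
          exact Set.Infinite.ncard hi
    rw [this]
    exact (measurableSet_eq_coe h ∅).union (measurableSet_finite h).compl
  | k + 1 =>
    have : (fun a => Nat.card (A a)) ⁻¹' {k + 1} =
        ⋃ S ∈ {S : Finset ℕ | S.card = k + 1}, {a | A a = ↑S} := by
      ext a
      simp only [Set.mem_preimage, Set.mem_singleton_iff, Set.mem_iUnion, Set.mem_setOf_eq]
      constructor
      · intro h0
        have hf : (A a).Finite := by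
          by_contra hi
          rw [Nat.card_coe_set_eq, Set.Infinite.ncard hi] at h0; omega
        refine ⟨hf.toFinset, ?_, by simp⟩
        rw [Nat.card_coe_set_eq] at h0
        rw [← h0]
        exact (Set.ncard_eq_toFinset_card _ hf).symm
      · rintro ⟨S, hS, hA⟩
        rw [Nat.card_coe_set_eq, hA, Set.ncard_coe_finset, hS]
    rw [this]
    exact MeasurableSet.biUnion (Set.to_countable _) fun S _ => measurableSet_eq_coe h S

end NatCard

section MeasEvents

lemma measurable_coord1 (x y : ℕ) : Measurable fun ω : PNet => ω.1 x y :=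
  ((measurable_pi_apply y).comp ((measurable_pi_apply x).comp measurable_fst))

lemma measurable_coord2 (x y : ℕ) : Measurable fun ω : PNet => ω.2 x y :=
  ((measurable_pi_apply y).comp ((measurable_pi_apply x).comp measurable_snd))

lemma measurableSet_gadj (x y : ℕ) : MeasurableSet {ω : PNet | (GNet.graph ω.1).Adj x y} := by
  have : {ω : PNet | (GNet.graph ω.1).Adj x y} =
      {_ω : PNet | x ≠ y} ∩ ({ω | ω.1 x y = true} ∪ {ω | ω.1 y x = true}) := by
    ext ω; simp [GNet.graph]
  rw [this]
  exact (MeasurableSet.const _).inter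
    (((measurable_coord1 x y) (measurableSet_singleton true)).union
      ((measurable_coord1 y x) (measurableSet_singleton true)))

lemma measurableSet_oadj (x y : ℕ) : MeasurableSet {ω : PNet | (PNet.openGraph ω).Adj x y} := by
  have : {ω : PNet | (PNet.openGraph ω).Adj x y} =
      {ω : PNet | (GNet.graph ω.1).Adj x y} ∩
        ({ω | ω.2 x y = true} ∪ {ω | ω.2 y x = true}) := by
    ext ω; simp [PNet.openGraph]
  rw [this]
  exact (measurableSet_gadj x y).inter
    (((measurable_coord2 x y) (measurableSet_singleton true)).union
      ((measurable_coord2 y x) (measurableSet_singleton true)))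

/-- reachability in at most `n` steps in the open graph -/
def reachIn (ω : PNet) : ℕ → ℕ → ℕ → Prop
  | 0, x, y => x = y
  | (n+1), x, y => ∃ z, reachIn ω n x z ∧ ((PNet.openGraph ω).Adj z y ∨ z = y)

lemma reachIn_reachable {ω : PNet} {n x y : ℕ} (h : reachIn ω n x y) :
    (PNet.openGraph ω).Reachable x y := by
  induction n generalizing y with
  | zero => exact h ▸ SimpleGraph.Reachable.refl x
  | succ n ih =>
    obtain ⟨z, hz, hadj⟩ := h
    rcases hadj with hadj | rfl
    · exact (ih hz).trans hadj.reachable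
    · exact ih hz

lemma reachIn_cons {ω : PNet} {n u v y : ℕ} (h : (PNet.openGraph ω).Adj u v)
    (hr : reachIn ω n v y) : reachIn ω (n+1) u y := by
  induction n generalizing y with
  | zero => exact ⟨u, rfl, Or.inl (hr ▸ h)⟩
  | succ n ih =>
    obtain ⟨z, hz, hadj⟩ := hr
    exact ⟨z, ih hz, hadj⟩

lemma reachable_iff_reachIn {ω : PNet} {x y : ℕ} :
    (PNet.openGraph ω).Reachable x y ↔ ∃ n, reachIn ω n x y := by
  constructor
  · intro ⟨w⟩
    induction w with
    | nil => exact ⟨0, rfl⟩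
    | cons h _ ih =>
      obtain ⟨n, hn⟩ := ih
      exact ⟨n + 1, reachIn_cons h hn⟩
  · rintro ⟨n, hn⟩; exact reachIn_reachable hn

lemma measurableSet_reachIn (n x y : ℕ) : MeasurableSet {ω : PNet | reachIn ω n x y} := by
  induction n generalizing y with
  | zero =>
    simp only [reachIn]
    exact MeasurableSet.const _
  | succ n ih =>
    have : {ω : PNet | reachIn ω (n+1) x y} =
        ⋃ z, ({ω : PNet | reachIn ω n x z} ∩
          ({ω | (PNet.openGraph ω).Adj z y} ∪ {_ω : PNet | z = y})) := by
      ext ω; simp [reachIn]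
    rw [this]
    exact MeasurableSet.iUnion fun z =>
      (ih z).inter ((measurableSet_oadj z y).union (MeasurableSet.const _))

lemma measurableSet_mem_cluster (y x : ℕ) :
    MeasurableSet {ω : PNet | y ∈ PNet.cluster ω x} := by
  have : {ω : PNet | y ∈ PNet.cluster ω x} = ⋃ n, {ω | reachIn ω n x y} := by
    ext ω; simp [PNet.cluster, reachable_iff_reachIn]
  rw [this]
  exact MeasurableSet.iUnion fun n => measurableSet_reachIn n x y

end MeasEvents

section Relabel
variable (σ : ℕ ≃ ℕ) (ω : PNet)

lemma relabel_gadj (a b : ℕ) :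
    (GNet.graph (PNet.relabel σ ω).1).Adj (σ a) (σ b) ↔ (GNet.graph ω.1).Adj a b := by
  simp [GNet.graph, PNet.relabel, σ.injective.ne_iff]

lemma relabel_oadj (a b : ℕ) :
    (PNet.openGraph (PNet.relabel σ ω)).Adj (σ a) (σ b) ↔ (PNet.openGraph ω).Adj a b := by
  constructor
  · rintro ⟨h1, h2⟩
    exact ⟨(relabel_gadj σ ω a b).1 h1, by simpa [PNet.relabel] using h2⟩
  · rintro ⟨h1, h2⟩
    exact ⟨(relabel_gadj σ ω a b).2 h1, by simpa [PNet.relabel] using h2⟩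

lemma relabel_relabel_symm : PNet.relabel σ.symm (PNet.relabel σ ω) = ω := by
  unfold PNet.relabel
  simp

lemma relabel_reachable_mp (τ : ℕ ≃ ℕ) (ω' : PNet) {a b : ℕ}
    (h : (PNet.openGraph ω').Reachable a b) :
    (PNet.openGraph (PNet.relabel τ ω')).Reachable (τ a) (τ b) := by
  obtain ⟨w⟩ := h
  induction w with
  | nil => exact SimpleGraph.Reachable.refl _
  | @cons u v _ h _ ih =>
    exact SimpleGraph.Reachable.trans (SimpleGraph.Adj.reachable
      ((relabel_oadj τ ω' u v).2 h)) ih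

lemma relabel_reachable (a b : ℕ) :
    (PNet.openGraph (PNet.relabel σ ω)).Reachable (σ a) (σ b) ↔
      (PNet.openGraph ω).Reachable a b := by
  constructor
  · intro h
    have := relabel_reachable_mp σ.symm (PNet.relabel σ ω) h
    rw [relabel_relabel_symm] at this
    simpa using this
  · exact relabel_reachable_mp σ ω

lemma relabel_cluster (y : ℕ) :
    PNet.cluster (PNet.relabel σ ω) (σ y) = σ '' PNet.cluster ω y := by
  ext z
  constructor
  · intro hz
    refine ⟨σ.symm z, ?_, by simp⟩
    have : (PNet.openGraph (PNet.relabel σ ω)).Reachable (σ y) (σ (σ.symm z)) := by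
      rw [Equiv.apply_symm_apply]; exact hz
    exact (relabel_reachable σ ω y (σ.symm z)).1 this
  · rintro ⟨u, hu, rfl⟩
    exact (relabel_reachable σ ω y u).2 hu

lemma relabel_closedDeg (y : ℕ) :
    PNet.closedDeg (PNet.relabel σ ω) (σ y) = PNet.closedDeg ω y := by
  unfold PNet.closedDeg
  have : {z : ℕ | (GNet.graph (PNet.relabel σ ω).1).Adj (σ y) z ∧
      ¬ (PNet.openGraph (PNet.relabel σ ω)).Adj (σ y) z} =
      σ '' {z : ℕ | (GNet.graph ω.1).Adj y z ∧ ¬ (PNet.openGraph ω).Adj y z} := by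
    ext z
    constructor
    · intro ⟨h1, h2⟩
      refine ⟨σ.symm z, ⟨?_, ?_⟩, by simp⟩
      · have := h1; rw [show z = σ (σ.symm z) by simp, relabel_gadj] at this; exact this
      · intro hc
        exact h2 (by rw [show z = σ (σ.symm z) by simp, relabel_oadj]; exact hc)
    · rintro ⟨u, ⟨h1, h2⟩, rfl⟩
      exact ⟨(relabel_gadj σ ω y u).2 h1, fun hc => h2 ((relabel_oadj σ ω y u).1 hc)⟩
  rw [this, Nat.card_coe_set_eq, Nat.card_coe_set_eq,
    Set.ncard_image_of_injective _ σ.injective]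

lemma relabel_natCard_cluster (y : ℕ) :
    Nat.card (PNet.cluster (PNet.relabel σ ω) (σ y)) = Nat.card (PNet.cluster ω y) := by
  rw [relabel_cluster, Nat.card_coe_set_eq, Nat.card_coe_set_eq,
    Set.ncard_image_of_injective _ σ.injective]

lemma relabel_finite_cluster (y : ℕ) :
    (PNet.cluster (PNet.relabel σ ω) (σ y)).Finite ↔ (PNet.cluster ω y).Finite := by
  rw [relabel_cluster]
  exact ⟨fun h => Set.Finite.of_finite_image h (σ.injective.injOn), fun h => h.image σ⟩

lemma relabel_mem_cluster (x y : ℕ) :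
    σ x ∈ PNet.cluster (PNet.relabel σ ω) (σ y) ↔ x ∈ PNet.cluster ω y := by
  rw [relabel_cluster]
  exact ⟨fun ⟨u, hu, he⟩ => by rwa [← σ.injective he], fun h => ⟨x, h, rfl⟩⟩

end Relabel

section Cluster

lemma mem_cluster_self (ω : PNet) (x : ℕ) : x ∈ PNet.cluster ω x :=
  SimpleGraph.Reachable.refl x

lemma cluster_eq_of_mem {ω : PNet} {x y : ℕ} (h : y ∈ PNet.cluster ω x) :
    PNet.cluster ω y = PNet.cluster ω x := by
  ext z
  exact ⟨fun hz => SimpleGraph.Reachable.trans h hz,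
    fun hz => SimpleGraph.Reachable.trans (SimpleGraph.Reachable.symm h) hz⟩

lemma mem_cluster_comm {ω : PNet} {x y : ℕ} :
    y ∈ PNet.cluster ω x ↔ x ∈ PNet.cluster ω y :=
  ⟨fun h => h.symm, fun h => h.symm⟩

lemma closedDeg_le_deg {ω : PNet} (hfin : (PNet.cluster ω 0).Finite) :
    PNet.closedDeg ω 0 ≤ GNet.deg ω.1 0 := by
  unfold PNet.closedDeg GNet.deg
  set N := {y : ℕ | (GNet.graph ω.1).Adj 0 y} with hN
  set D := {y : ℕ | (GNet.graph ω.1).Adj 0 y ∧ ¬ (PNet.openGraph ω).Adj 0 y} with hD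
  by_cases hNf : N.Finite
  · rw [Nat.card_coe_set_eq, Nat.card_coe_set_eq]
    exact Set.ncard_le_ncard (fun y hy => hy.1) hNf
  · have hopen : {y : ℕ | (PNet.openGraph ω).Adj 0 y}.Finite :=
      hfin.subset fun y hy => SimpleGraph.Adj.reachable hy
    have hDeq : D = N \ {y : ℕ | (PNet.openGraph ω).Adj 0 y} := by
      ext y; simp [hD, hN, Set.mem_diff]
    have hNi : N.Infinite := hNf
    have hDinf : D.Infinite := by
      rw [hDeq]; exact hNi.diff hopen
    have h1 : Nat.card D = 0 := by
      have := hDinf.to_subtype; exact Nat.card_eq_zero_of_infinite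
    have h2 : Nat.card N = 0 := by
      have := hNi.to_subtype
      exact Nat.card_eq_zero_of_infinite
    omega

end Cluster

open Classical in
noncomputable def mtpF (p : PNet × ℕ × ℕ) : ENNReal :=
  if (PNet.cluster p.1 p.2.2).Finite ∧ p.2.1 ∈ PNet.cluster p.1 p.2.2
  then (PNet.closedDeg p.1 p.2.2 : ENNReal) / (Nat.card (PNet.cluster p.1 p.2.2) : ENNReal)
  else 0

section MtpF
open Classical

lemma measurable_closedDeg_coe (y : ℕ) :
    Measurable fun ω : PNet => (PNet.closedDeg ω y : ENNReal) := by
  have h : Measurable fun ω : PNet =>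
      Nat.card {z : ℕ | (GNet.graph ω.1).Adj y z ∧ ¬ (PNet.openGraph ω).Adj y z} := by
    refine measurable_natCard fun n => ?_
    have : {ω : PNet | n ∈ {z : ℕ | (GNet.graph ω.1).Adj y z ∧ ¬ (PNet.openGraph ω).Adj y z}}
        = {ω : PNet | (GNet.graph ω.1).Adj y n} ∩ {ω : PNet | (PNet.openGraph ω).Adj y n}ᶜ := by
      ext ω; simp [Set.mem_setOf_eq]
    rw [this]
    exact (measurableSet_gadj y n).inter (measurableSet_oadj y n).compl
  exact measurable_from_top.comp h

lemma measurable_cardCluster_coe (y : ℕ) :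
    Measurable fun ω : PNet => (Nat.card (PNet.cluster ω y) : ENNReal) :=
  measurable_from_top.comp (measurable_natCard fun n => measurableSet_mem_cluster n y)

lemma measurable_mtpF : Measurable mtpF := by
  refine measurable_from_prod_countable_left fun p => ?_
  obtain ⟨x, y⟩ := p
  have hs : MeasurableSet {ω : PNet | (PNet.cluster ω y).Finite ∧ x ∈ PNet.cluster ω y} := by
    have : {ω : PNet | (PNet.cluster ω y).Finite ∧ x ∈ PNet.cluster ω y}
        = {ω : PNet | (PNet.cluster ω y).Finite} ∩ {ω : PNet | x ∈ PNet.cluster ω y} := rfl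
    rw [this]
    exact (measurableSet_finite fun n => measurableSet_mem_cluster n y).inter
      (measurableSet_mem_cluster x y)
  exact Measurable.ite hs ((measurable_closedDeg_coe y).div (measurable_cardCluster_coe y))
    measurable_const

lemma mtpF_inv (σ : ℕ ≃ ℕ) (ω : PNet) (x y : ℕ) :
    mtpF (PNet.relabel σ ω, σ x, σ y) = mtpF (ω, x, y) := by
  simp only [mtpF]
  rw [relabel_closedDeg, relabel_natCard_cluster]
  exact if_congr (and_congr (relabel_finite_cluster σ ω y) (relabel_mem_cluster σ ω x y))
    rfl rfl

lemma cardCluster_ne_zero {ω : PNet} (hfin : (PNet.cluster ω 0).Finite) :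
    (Nat.card (PNet.cluster ω 0) : ENNReal) ≠ 0 := by
  rw [Ne, Nat.cast_eq_zero, Nat.card_coe_set_eq]
  have : 0 < (PNet.cluster ω 0).ncard := (Set.ncard_pos hfin).2 ⟨0, mem_cluster_self ω 0⟩
  omega

lemma card_toFinset {ω : PNet} (hfin : (PNet.cluster ω 0).Finite) :
    hfin.toFinset.card = Nat.card (PNet.cluster ω 0) := by
  rw [Nat.card_coe_set_eq, Set.ncard_eq_toFinset_card _ hfin]

lemma claimA {ω : PNet} (hfin : (PNet.cluster ω 0).Finite) :
    ∑' x : ℕ, mtpF (ω, x, 0) = (PNet.closedDeg ω 0 : ENNReal) := by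
  set c := (PNet.closedDeg ω 0 : ENNReal) / (Nat.card (PNet.cluster ω 0) : ENNReal) with hc
  have hterm : ∀ x, mtpF (ω, x, 0) = if x ∈ PNet.cluster ω 0 then c else 0 := by
    intro x
    simp only [mtpF]
    by_cases hx : x ∈ PNet.cluster ω 0 <;> simp [hx, hfin, hc]
  calc ∑' x : ℕ, mtpF (ω, x, 0) = ∑ _b ∈ hfin.toFinset, c := by
        rw [tsum_congr hterm, tsum_eq_sum (s := hfin.toFinset)
          (fun b hb => by simp only [Set.Finite.mem_toFinset] at hb; simp [hb])]
        exact Finset.sum_congr rfl fun b hb => by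
          simp only [Set.Finite.mem_toFinset] at hb; simp [hb]
    _ = (Nat.card (PNet.cluster ω 0) : ENNReal) * c := by
        rw [Finset.sum_const, nsmul_eq_mul, card_toFinset hfin]
    _ = (PNet.closedDeg ω 0 : ENNReal) := by
        rw [hc, ENNReal.mul_div_cancel (cardCluster_ne_zero hfin) (by simp)]

lemma claimB {ω : PNet} (hfin : (PNet.cluster ω 0).Finite) :
    ∑' x : ℕ, mtpF (ω, 0, x) =
      (∑' x : PNet.cluster ω 0, (PNet.closedDeg ω (x : ℕ) : ENNReal))
        / (Nat.card (PNet.cluster ω 0) : ENNReal) := by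
  have hterm : ∀ x, mtpF (ω, 0, x) = if x ∈ PNet.cluster ω 0
      then (PNet.closedDeg ω x : ENNReal) / (Nat.card (PNet.cluster ω 0) : ENNReal) else 0 := by
    intro x
    simp only [mtpF]
    by_cases hx : x ∈ PNet.cluster ω 0
    · have hcl : PNet.cluster ω x = PNet.cluster ω 0 := cluster_eq_of_mem hx
      rw [hcl, if_pos ⟨hfin, mem_cluster_self ω 0⟩, if_pos hx]
    · have h0x : (0 : ℕ) ∉ PNet.cluster ω x := fun h => hx (mem_cluster_comm.1 h)
      rw [if_neg (fun hcond => h0x hcond.2), if_neg hx]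
  rw [tsum_congr hterm, tsum_eq_sum (s := hfin.toFinset)
    (fun b hb => by simp only [Set.Finite.mem_toFinset] at hb; simp [hb])]
  rw [tsum_subtype (PNet.cluster ω 0) (fun z => (PNet.closedDeg ω z : ENNReal))]
  rw [tsum_eq_sum (s := hfin.toFinset)
    (fun b hb => by
      simp only [Set.Finite.mem_toFinset] at hb
      simp [Set.indicator_of_notMem hb])]
  rw [div_eq_mul_inv, Finset.sum_mul]
  refine Finset.sum_congr rfl fun b hb => ?_
  simp only [Set.Finite.mem_toFinset] at hb
  simp [hb, Set.indicator_of_mem hb, div_eq_mul_inv]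

end MtpF

section Main

lemma measurable_degG : Measurable fun g : GNet => (GNet.deg g 0 : ENNReal) := by
  refine measurable_from_top.comp (measurable_natCard fun n => ?_)
  have : {g : GNet | n ∈ {y : ℕ | (GNet.graph g).Adj 0 y}} =
      {_g : GNet | (0 : ℕ) ≠ n} ∩ ({g : GNet | g 0 n = true} ∪ {g : GNet | g n 0 = true}) := by
    ext g; simp [GNet.graph]
  rw [this]
  have h1 : Measurable fun g : GNet => g 0 n :=
    (measurable_pi_apply n).comp (measurable_pi_apply 0)
  have h2 : Measurable fun g : GNet => g n 0 :=
    (measurable_pi_apply 0).comp (measurable_pi_apply n)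
  exact (MeasurableSet.const _).inter
    ((h1 (measurableSet_singleton true)).union (h2 (measurableSet_singleton true)))

/-- The I-part of a percolation. -/
noncomputable def Ival (ν : Measure PNet) : ENNReal :=
  ∫⁻ ω, (∑' x : PNet.cluster ω 0, (PNet.closedDeg ω (x : ℕ) : ENNReal))
      / (Nat.card (PNet.cluster ω 0) : ENNReal) ∂ν

noncomputable def Aval (ν : Measure PNet) : ENNReal :=
  ∫⁻ ω, ((GNet.deg ω.1 0 : ENNReal) - (PNet.closedDeg ω 0 : ENNReal)) ∂ν

lemma key1 {μ : Measure GNet} {ν : Measure PNet} (hν : ν ∈ FinitePercolations μ) :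
    Ival ν + Aval ν = ∫⁻ g, (GNet.deg g 0 : ENNReal) ∂μ := by
  obtain ⟨hprob, huni, hmap, hfin⟩ := hν
  have hmtp := huni mtpF measurable_mtpF mtpF_inv
  have e1 : ∫⁻ ω, ∑' x : ℕ, mtpF (ω, 0, x) ∂ν = Ival ν :=
    lintegral_congr_ae (hfin.mono fun ω h => claimB h)
  have e2 : ∫⁻ ω, ∑' x : ℕ, mtpF (ω, x, 0) ∂ν
      = ∫⁻ ω, (PNet.closedDeg ω 0 : ENNReal) ∂ν :=
    lintegral_congr_ae (hfin.mono fun ω h => claimA h)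
  have hI : Ival ν = ∫⁻ ω, (PNet.closedDeg ω 0 : ENNReal) ∂ν := by
    rw [← e1, hmtp, e2]
  rw [hI]
  unfold Aval
  rw [← lintegral_add_left (measurable_closedDeg_coe 0)]
  have e3 : ∫⁻ ω, ((PNet.closedDeg ω 0 : ENNReal) +
      ((GNet.deg ω.1 0 : ENNReal) - (PNet.closedDeg ω 0 : ENNReal))) ∂ν
      = ∫⁻ ω, (GNet.deg ω.1 0 : ENNReal) ∂ν := by
    refine lintegral_congr_ae (hfin.mono fun ω h => ?_)
    exact add_tsub_cancel_of_le (Nat.cast_le.2 (closedDeg_le_deg h))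
  rw [e3, ← hmap, lintegral_map measurable_degG measurable_fst]

lemma nu0_mem {μ : Measure GNet} [IsProbabilityMeasure μ] (hμ : UnimodularG μ) :
    μ.map (fun g => (g, fun _ _ => false) : GNet → PNet) ∈ FinitePercolations μ := by
  set T : GNet → PNet := fun g => (g, fun _ _ => false) with hT
  have hTm : Measurable T := measurable_id.prodMk measurable_const
  refine ⟨Measure.isProbabilityMeasure_map hTm.aemeasurable, ?_, ?_, ?_⟩
  · -- unimodularity
    intro f hf hinv
    have h1 : ∀ x : ℕ, Measurable fun ω : PNet => f (ω, 0, x) := fun x =>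
      hf.comp (measurable_id.prodMk measurable_const)
    have h2 : ∀ x : ℕ, Measurable fun ω : PNet => f (ω, x, 0) := fun x =>
      hf.comp (measurable_id.prodMk measurable_const)
    rw [lintegral_map (Measurable.ennreal_tsum h1) hTm,
      lintegral_map (Measurable.ennreal_tsum h2) hTm]
    have hF : Measurable fun q : GNet × ℕ × ℕ => f ((q.1, fun _ _ => false), q.2) :=
      hf.comp ((measurable_fst.prodMk measurable_const).prodMk measurable_snd)
    have hFinv : ∀ (σ : ℕ ≃ ℕ) (g : GNet) (x y : ℕ),
        f ((GNet.relabel σ g, fun _ _ => false), σ x, σ y) = f ((g, fun _ _ => false), x, y) := by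
      intro σ g x y
      have : ((GNet.relabel σ g, fun _ _ => false) : PNet)
          = PNet.relabel σ (g, fun _ _ => false) := rfl
      rw [this, hinv]
    exact hμ (fun q => f ((q.1, fun _ _ => false), q.2)) hF hFinv
  · -- projection
    rw [Measure.map_map measurable_fst hTm]
    exact Measure.map_id
  · -- finite clusters
    rw [ae_map_iff hTm.aemeasurable
      (measurableSet_finite fun n => measurableSet_mem_cluster n 0)]
    refine Filter.Eventually.of_forall fun g => ?_
    have hsub : PNet.cluster (T g) 0 ⊆ {0} := by
      intro z hz
      obtain ⟨w⟩ := hz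
      cases w with
      | nil => rfl
      | cons h _ =>
        exact absurd h.2 (by simp [hT])
    exact (Set.finite_singleton 0).subset hsub


/-- `ι_E(μ) + α(μ) = E_μ[deg o]`; in particular `μ` is amenable (`ι_E(μ) = 0`) iff
`α(μ) = E_μ[deg o]`. -/
theorem stmt_17 (μ : Measure GNet) [IsProbabilityMeasure μ] (hμ : UnimodularG μ)
    (hdeg : ∫⁻ g, (GNet.deg g 0 : ENNReal) ∂μ ≠ ⊤) :
    iotaE μ + alphaE μ = ∫⁻ g, (GNet.deg g 0 : ENNReal) ∂μ ∧
      (iotaE μ = 0 ↔ alphaE μ = ∫⁻ g, (GNet.deg g 0 : ENNReal) ∂μ) := by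
  set C := ∫⁻ g, (GNet.deg g 0 : ENNReal) ∂μ with hC
  have hiotadef : iotaE μ = ⨅ ν ∈ FinitePercolations μ, Ival ν := rfl
  have halphadef : alphaE μ = ⨆ ν ∈ FinitePercolations μ, Aval ν := rfl
  have hν0 := nu0_mem hμ
  have hIle : ∀ ν ∈ FinitePercolations μ, Ival ν ≤ C := fun ν h => by
    rw [hC, ← key1 h]; exact le_self_add
  have hAeq : ∀ ν ∈ FinitePercolations μ, Aval ν = C - Ival ν := by
    intro ν h
    have hIne : Ival ν ≠ ⊤ := fun ht => hdeg (by rw [hC, ← key1 h, ht, top_add])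
    exact ENNReal.eq_sub_of_add_eq hIne (by rw [add_comm]; exact key1 h)
  have hiota_le : iotaE μ ≤ C := by
    rw [hiotadef]
    exact le_trans (iInf₂_le _ hν0) (hIle _ hν0)
  have halpha : alphaE μ = C - iotaE μ := by
    apply le_antisymm
    · rw [halphadef]
      refine iSup₂_le fun ν h => ?_
      rw [hAeq ν h]
      exact tsub_le_tsub_left (iInf₂_le _ h) C
    · rw [hiotadef, ENNReal.sub_iInf]
      refine iSup_le fun ν => ?_
      rw [ENNReal.sub_iInf]
      refine iSup_le fun h => ?_
      rw [← hAeq ν h, halphadef]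
      exact le_iSup₂ (f := fun ν _ => Aval ν) ν h
  have hmain : iotaE μ + alphaE μ = C := by
    rw [halpha, add_tsub_cancel_of_le hiota_le]
  refine ⟨hmain, ?_, ?_⟩
  · intro h0
    rw [halpha, h0, tsub_zero]
  · intro ha
    rw [ha] at hmain
    have h2 : C + iotaE μ = C + 0 := by rw [add_zero, add_comm]; exact hmain
    exact (ENNReal.add_right_inj hdeg).1 h2


end Main
end
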